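/- (Graham–Knuth–Patashnik's identity) For all natural numbers m and n with n ≤ m and all complex numbers r, x, y, the sum over k from 0 to m−n of C(m+r, m−n−k)·binom(n+k, n)·x^{m−n−k}·y^k equals the sum over k from 0 to m−n of C(−r, m−n−k)·binom(n+k, n)·(−x)^{m−n−k}·(x+y)^k, where binom(n+k,n) denotes the ordinary binomial coefficient of natural numbers. -/

import Mathlib

/-!
Expand `(x + y) ^ k` on the right by the binomial theorem and compare coefficients of
`x ^ l * y ^ j`. Trinomial revision `C(n+j+i, n) C(j+i, j) = C(n+j+i, i) C(n+j, n)` reduces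
the coefficient identity to `∑_{i+u=l} C(p+i, i) (-1)^u C(-r, u) = C(p+l+r, l)` with
`p = n + j`, which is Vandermonde's convolution after upper negation
`C(p+i, i) = (-1)^i C(-p-1, i)`.
-/

/-- The generalized binomial coefficient `C(x, k) = x(x-1)⋯(x-k+1)/k!` for `x : ℂ`. -/
noncomputable def genBinom (x : ℂ) (k : ℕ) : ℂ := (∏ i ∈ Finset.range k, (x - i)) / (Nat.factorial k)

open Finset

theorem genBinom_eq_choose (x : ℂ) (k : ℕ) : genBinom x k = Ring.choose x k := by
  rw [genBinom, Ring.choose_eq_smul, ← descPochhammer_eval_eq_prod_range, smul_eq_mul,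
    inv_mul_eq_div, Polynomial.descPochhammer_smeval_eq_ascPochhammer,
    Polynomial.ascPochhammer_smeval_eq_eval, descPochhammer_eval_eq_ascPochhammer]

theorem Finset.Nat.sum_antidiagonal_antidiagonal_assoc {M : Type*} [AddCommMonoid M] (n : ℕ)
    (f : ℕ → ℕ → ℕ → M) :
    ∑ p ∈ antidiagonal n, ∑ q ∈ antidiagonal p.2, f p.1 q.1 q.2 =
      ∑ p ∈ antidiagonal n, ∑ q ∈ antidiagonal p.1, f q.1 q.2 p.2 := by
  simp only [Finset.sum_sigma']
  apply Finset.sum_nbij' (fun ⟨⟨i, _⟩, ⟨k, l⟩⟩ ↦ ⟨(i + k, l), (i, k)⟩)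
    (fun ⟨⟨_, j⟩, ⟨k, l⟩⟩ ↦ ⟨(k, l + j), (l, j)⟩) <;> aesop (add simp [add_assoc])

theorem Nat.add_add_choose_mul_add_choose (n j i : ℕ) :
    (n + (j + i)).choose n * (j + i).choose j = (n + j + i).choose i * (n + j).choose n := by
  have h := Nat.choose_mul (n := n + j + i) (k := n + j) (s := n) (Nat.le_add_right n j)
  rw [Nat.choose_symm_add] at h
  simpa only [Nat.add_sub_cancel_left, add_assoc] using h.symm

namespace Ring

variable {R : Type*} [CommRing R] [BinomialRing R]

theorem choose_neg_eq_neg_one_pow_mul (r : R) (k : ℕ) :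
    choose (-r) k = (-1) ^ k * choose (r + k - 1) k := by
  rw [choose_neg, Units.smul_def, zsmul_eq_mul, Int.cast_negOnePow_natCast]

theorem natCast_add_choose_eq_neg_one_pow_mul (p i : ℕ) :
    (((p + i).choose i : ℕ) : R) = (-1) ^ i * choose (-(p + 1 : R)) i := by
  rw [choose_neg_eq_neg_one_pow_mul, ← mul_assoc, ← mul_pow, neg_one_mul, neg_neg, one_pow,
    one_mul, show (p + 1 : R) + i - 1 = ((p + i : ℕ) : R) by push_cast; ring, choose_natCast]

theorem sum_antidiagonal_add_choose_mul_choose_neg (r : R) (p l : ℕ) :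
    ∑ q ∈ antidiagonal l, ((p + q.1).choose q.1 : R) * ((-1) ^ q.2 * choose (-r) q.2) =
      choose (p + l + r) l := by
  calc ∑ q ∈ antidiagonal l, ((p + q.1).choose q.1 : R) * ((-1) ^ q.2 * choose (-r) q.2)
      = (-1) ^ l * ∑ q ∈ antidiagonal l, choose (-(p + 1 : R)) q.1 * choose (-r) q.2 := by
        rw [mul_sum]
        refine sum_congr rfl fun q hq => ?_
        rw [natCast_add_choose_eq_neg_one_pow_mul, ← mem_antidiagonal.mp hq, pow_add]
        ring
    _ = (-1) ^ l * choose (-(p + 1 + r)) l := by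
        rw [← add_choose_eq l (Commute.all _ _), ← neg_add]
    _ = choose (p + l + r) l := by
        rw [choose_neg_eq_neg_one_pow_mul, ← mul_assoc, ← mul_pow, neg_one_mul, neg_neg, one_pow,
          one_mul]
        congr 1
        ring

theorem sum_antidiagonal_choose_mul_choose_mul_choose_neg (r : R) (n j l : ℕ) :
    ∑ q ∈ antidiagonal l,
        ((n + (j + q.1)).choose n * (j + q.1).choose j : R) * ((-1) ^ q.2 * choose (-r) q.2) =
      choose (n + j + l + r) l * (n + j).choose n := by
  simp_rw [← Nat.cast_mul, Nat.add_add_choose_mul_add_choose, Nat.cast_mul, mul_right_comm _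
    ((n + j).choose n : R), ← sum_mul, sum_antidiagonal_add_choose_mul_choose_neg]
  push_cast
  ring_nf

theorem sum_antidiagonal_choose_add_mul_pow_mul_pow (r x y : R) (n M : ℕ) :
    ∑ p ∈ antidiagonal M, choose (n + M + r) p.2 * ((n + p.1).choose n : R) * x ^ p.2 * y ^ p.1 =
      ∑ p ∈ antidiagonal M,
        choose (-r) p.2 * ((n + p.1).choose n : R) * (-x) ^ p.2 * (x + y) ^ p.1 := by
  symm
  calc ∑ p ∈ antidiagonal M,
        choose (-r) p.2 * ((n + p.1).choose n : R) * (-x) ^ p.2 * (x + y) ^ p.1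
      = ∑ p ∈ antidiagonal M, ∑ q ∈ antidiagonal p.1, choose (-r) p.2 *
          ((n + (q.1 + q.2)).choose n : R) * (-x) ^ p.2 *
            ((q.1 + q.2).choose q.1 • (y ^ q.1 * x ^ q.2)) := by
        refine sum_congr rfl fun p _ => ?_
        rw [add_comm x y, (Commute.all y x).add_pow', mul_sum]
        refine sum_congr rfl fun q hq => ?_
        rw [mem_antidiagonal.mp hq]
    _ = ∑ p ∈ antidiagonal M, ∑ q ∈ antidiagonal p.2, choose (-r) q.2 *
          ((n + (p.1 + q.1)).choose n : R) * (-x) ^ q.2 *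
            ((p.1 + q.1).choose p.1 • (y ^ p.1 * x ^ q.1)) :=
        (Finset.Nat.sum_antidiagonal_antidiagonal_assoc M fun j i u => choose (-r) u *
          ((n + (j + i)).choose n : R) * (-x) ^ u * ((j + i).choose j • (y ^ j * x ^ i))).symm
    _ = ∑ p ∈ antidiagonal M, (∑ q ∈ antidiagonal p.2, ((n + (p.1 + q.1)).choose n *
          (p.1 + q.1).choose p.1 : R) * ((-1) ^ q.2 * choose (-r) q.2)) * (x ^ p.2 * y ^ p.1) := by
        refine sum_congr rfl fun p _ => ?_
        rw [sum_mul]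
        refine sum_congr rfl fun q hq => ?_
        rw [← mem_antidiagonal.mp hq, neg_pow, nsmul_eq_mul, pow_add]
        ring
    _ = ∑ p ∈ antidiagonal M,
          choose (n + M + r) p.2 * ((n + p.1).choose n : R) * x ^ p.2 * y ^ p.1 := by
        refine sum_congr rfl fun p hp => ?_
        rw [sum_antidiagonal_choose_mul_choose_mul_choose_neg, add_assoc (n : R), ← Nat.cast_add,
          mem_antidiagonal.mp hp]
        ring

end Ring

/-- Graham–Knuth–Patashnik's identity. -/
theorem gkp_identity (m n : ℕ) (hnm : n ≤ m) (r x y : ℂ) :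
    ∑ k ∈ Finset.range (m - n + 1),
        genBinom ((m : ℂ) + r) (m - n - k) * ((n + k).choose n : ℂ) * x ^ (m - n - k) * y ^ k =
      ∑ k ∈ Finset.range (m - n + 1),
        genBinom (-r) (m - n - k) * ((n + k).choose n : ℂ) * (-x) ^ (m - n - k) *
          (x + y) ^ k := by
  obtain ⟨M, rfl⟩ := Nat.exists_eq_add_of_le hnm
  have h := Ring.sum_antidiagonal_choose_add_mul_pow_mul_pow r x y n M
  rw [Finset.Nat.sum_antidiagonal_eq_sum_range_succ (fun k u => Ring.choose (n + M + r) u *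
      ((n + k).choose n : ℂ) * x ^ u * y ^ k),
    Finset.Nat.sum_antidiagonal_eq_sum_range_succ (fun k u => Ring.choose (-r) u *
      ((n + k).choose n : ℂ) * (-x) ^ u * (x + y) ^ k)] at h
  simpa only [Nat.add_sub_cancel_left, genBinom_eq_choose, Nat.cast_add] using h
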